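/- Let $A$ be a bialgebra and $\beta : A \otimes A \to K$ a linear map. Define the twisted multiplication $x *_\beta y = \beta(x_{(1)} \otimes y_{(1)})\, x_{(2)} y_{(2)}$ on $A$. Then $\beta$ satisfies the unital 2-cocycle conditions $\beta(y_{(1)}\otimes z_{(1)})\beta(x \otimes y_{(2)}z_{(2)}) = \beta(x_{(1)}\otimes y_{(1)})\beta(x_{(2)}y_{(2)}\otimes z)$ and $\beta(x \otimes 1) = \beta(1\otimes x) = \varepsilon(x)$ if and only if $(A, *_\beta)$ is an associative unital algebra with unit $1_A$. -/

import Mathlib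

open TensorProduct

variable {K A : Type*}

section Defs

variable [CommRing K] [Ring A] [Bialgebra K A]

/-- The comultiplication of the tensor product coalgebra `A ⊗ A`:
`Δ(x ⊗ y) = (x₁ ⊗ y₁) ⊗ (x₂ ⊗ y₂)`. -/
noncomputable def comul2 : (A ⊗[K] A) →ₗ[K] (A ⊗[K] A) ⊗[K] (A ⊗[K] A) :=
  (TensorProduct.tensorTensorTensorComm K A A A A).toLinearMap ∘ₗ
    (TensorProduct.map Coalgebra.comul Coalgebra.comul)

/-- The comultiplication of the tensor product coalgebra `A ⊗ (A ⊗ A)`. -/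
noncomputable def comul3 : (A ⊗[K] (A ⊗[K] A)) →ₗ[K]
    (A ⊗[K] (A ⊗[K] A)) ⊗[K] (A ⊗[K] (A ⊗[K] A)) :=
  (TensorProduct.tensorTensorTensorComm K A A (A ⊗[K] A) (A ⊗[K] A)).toLinearMap ∘ₗ
    (TensorProduct.map Coalgebra.comul comul2)

/-- Convolution product on linear maps `A ⊗ A → K`. -/
noncomputable def conv2 (f g : (A ⊗[K] A) →ₗ[K] K) : (A ⊗[K] A) →ₗ[K] K :=
  (TensorProduct.lid K K).toLinearMap ∘ₗ (TensorProduct.map f g) ∘ₗ comul2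

/-- Convolution product on linear maps `A ⊗ (A ⊗ A) → K`. -/
noncomputable def conv3 (f g : (A ⊗[K] (A ⊗[K] A)) →ₗ[K] K) :
    (A ⊗[K] (A ⊗[K] A)) →ₗ[K] K :=
  (TensorProduct.lid K K).toLinearMap ∘ₗ (TensorProduct.map f g) ∘ₗ comul3

/-- Convolution product on linear maps `A ⊗ A → A`. -/
noncomputable def conv2A (f g : (A ⊗[K] A) →ₗ[K] A) : (A ⊗[K] A) →ₗ[K] A :=
  (LinearMap.mul' K A) ∘ₗ (TensorProduct.map f g) ∘ₗ comul2

/-- The 2-cocycle equation for `β` relative to a multiplication map `m : A ⊗ A → A`: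
`β(y₁ ⊗ z₁) β(x ⊗ y₂z₂) = β(x₁ ⊗ y₁) β(x₂y₂ ⊗ z)` as maps on `A ⊗ (A ⊗ A)`,
written in convolution form `(ε ⊗ β) * (β ∘ (id ⊗ m)) = (β ⊗ ε) * (β ∘ (m ⊗ id))`. -/
noncomputable def IsCocycleEq (m : (A ⊗[K] A) →ₗ[K] A) (β : (A ⊗[K] A) →ₗ[K] K) : Prop :=
  conv3 ((TensorProduct.lid K K).toLinearMap ∘ₗ TensorProduct.map Coalgebra.counit β)
      (β ∘ₗ TensorProduct.map LinearMap.id m) =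
    conv3 (((TensorProduct.lid K K).toLinearMap ∘ₗ TensorProduct.map β Coalgebra.counit)
        ∘ₗ (TensorProduct.assoc K A A A).symm.toLinearMap)
      ((β ∘ₗ TensorProduct.map m LinearMap.id) ∘ₗ
        (TensorProduct.assoc K A A A).symm.toLinearMap)

/-- The normalization condition `β(x ⊗ 1) = β(1 ⊗ x) = ε(x)`. -/
def IsUnital (β : (A ⊗[K] A) →ₗ[K] K) : Prop :=
  ∀ x : A, β (x ⊗ₜ[K] (1 : A)) = Coalgebra.counit (R := K) x ∧
    β ((1 : A) ⊗ₜ[K] x) = Coalgebra.counit (R := K) x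

/-- The singly twisted multiplication `x *_β y = β(x₁ ⊗ y₁) x₂ y₂`. -/
noncomputable def mulBeta (β : (A ⊗[K] A) →ₗ[K] K) : (A ⊗[K] A) →ₗ[K] A :=
  conv2A ((Algebra.linearMap K A) ∘ₗ β) (LinearMap.mul' K A)

end Defs

/-!
Write `convSMul φ f` for `c ↦ φ(c₁) • f(c₂)`, so that `mulBeta β = convSMul β μ`. Since the
multiplication `μ` and the counit are coalgebra maps, `ε(x *_β y) = β(x ⊗ y)` and, by
coassociativity, `Δ(x *_β y) = (x₁ *_β y₁) ⊗ x₂y₂`. The cocycle condition says exactly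
`β(x ⊗ (y *_β z)) = β((x *_β y) ⊗ z)`: applying `ε` to associativity gives it, and conversely the
formula for `Δ` expands `(x *_β y) *_β z = β((x₁ *_β y₁) ⊗ z₁) x₂y₂z₂` and
`x *_β (y *_β z) = β(x₁ ⊗ (y₁ *_β z₁)) x₂y₂z₂`, which then agree termwise. Unitality is the same
argument with `Δ1 = 1 ⊗ 1`: `x *_β 1 = β(x₁ ⊗ 1) x₂` and `ε(x *_β 1) = β(x ⊗ 1)`.
-/

open Coalgebra

section ConvSMul

variable {R C D M N : Type*} [CommSemiring R] [AddCommMonoid C] [Module R C]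
  [AddCommMonoid D] [Module R D] [AddCommMonoid M] [Module R M] [AddCommMonoid N] [Module R N]

noncomputable def convSMul [CoalgebraStruct R C] (φ : C →ₗ[R] R) (f : C →ₗ[R] M) :
    C →ₗ[R] M :=
  (TensorProduct.lid R M).toLinearMap ∘ₗ map φ f ∘ₗ comul

section CoalgebraStruct

variable [CoalgebraStruct R C]

lemma Coalgebra.Repr.convSMul_apply {c : C} {ι : Type*} (𝓡 : Repr R c ι) (φ : C →ₗ[R] R)
    (f : C →ₗ[R] M) : convSMul φ f c = ∑ i ∈ 𝓡.index, φ (𝓡.left i) • f (𝓡.right i) := by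
  simp [convSMul, ← 𝓡.eq]

lemma comp_convSMul (g : M →ₗ[R] N) (φ : C →ₗ[R] R) (f : C →ₗ[R] M) :
    g ∘ₗ convSMul φ f = convSMul φ (g ∘ₗ f) := by
  ext c
  simp [(ℛ R c).convSMul_apply]

end CoalgebraStruct

variable [Coalgebra R C]

lemma convSMul_counit (φ : C →ₗ[R] R) : convSMul φ counit = φ := by
  ext c
  have h := congr(TensorProduct.lid R R (φ.rTensor R $(lTensor_counit_comul (R := R) c)))
  rw [← LinearMap.comp_apply (φ.rTensor R), LinearMap.rTensor_comp_lTensor] at h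
  simpa [convSMul] using h

/-- Both sides are `c ↦ φ(c₁) • f(c₂) ⊗ g(c₃)`, bracketed in the two ways coassociativity
identifies. -/
lemma map_convSMul_comp_comul (φ : C →ₗ[R] R) (f : C →ₗ[R] M) (g : C →ₗ[R] N) :
    map (convSMul φ f) g ∘ₗ comul = convSMul φ (map f g ∘ₗ comul) := by
  have hα : map ((TensorProduct.lid R M).toLinearMap ∘ₗ map φ f) g =
      (TensorProduct.lid R (M ⊗[R] N)).toLinearMap ∘ₗ map φ (map f g) ∘ₗ
        (TensorProduct.assoc R C C C).toLinearMap := by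
    ext a b c
    simp [smul_tmul']
  ext c
  calc map (convSMul φ f) g (comul c)
      = map ((TensorProduct.lid R M).toLinearMap ∘ₗ map φ f) g (comul.rTensor C (comul c)) := by
        rw [LinearMap.map_rTensor]; rfl
    _ = _ := by
        rw [hα]
        simp [convSMul]

variable [Coalgebra R D]

lemma convSMul_comp_coalgHom (φ : C →ₗ[R] R) (f : C →ₗ[R] M) (F : D →ₗc[R] C) :
    convSMul φ f ∘ₗ (F : D →ₗ[R] C) = convSMul (φ ∘ₗ F) (f ∘ₗ F) := by
  ext d
  simp only [convSMul, LinearMap.comp_apply, CoalgHom.coe_toLinearMap,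
    ← CoalgHomClass.map_comp_comul_apply F d, map_map]

lemma convSMul_counit_tensor_tmul (ψ : D →ₗ[R] R) (g : C ⊗[R] D →ₗ[R] M) (c : C) (d : D) :
    convSMul ((TensorProduct.lid R R).toLinearMap ∘ₗ map counit ψ) g (c ⊗ₜ d) =
      convSMul ψ (g ∘ₗ TensorProduct.mk R C D c) d := by
  rw [(ℛ R d).convSMul_apply]
  simp only [convSMul, LinearMap.comp_apply, TensorProduct.comul_tmul]
  rw [← (ℛ R c).eq, ← (ℛ R d).eq]
  simp only [sum_tmul, tmul_sum, map_sum]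
  refine Finset.sum_congr rfl fun j _ => ?_
  conv_rhs => rw [← sum_counit_smul (ℛ R c)]
  simp [Finset.smul_sum, mul_smul, smul_comm (ψ _)]

lemma convSMul_tensor_counit_tmul (ψ : C →ₗ[R] R) (g : C ⊗[R] D →ₗ[R] M) (c : C) (d : D) :
    convSMul ((TensorProduct.lid R R).toLinearMap ∘ₗ map ψ counit) g (c ⊗ₜ d) =
      convSMul ψ (g ∘ₗ (TensorProduct.mk R C D).flip d) c := by
  rw [(ℛ R c).convSMul_apply]
  simp only [convSMul, LinearMap.comp_apply, TensorProduct.comul_tmul]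
  rw [← (ℛ R c).eq, ← (ℛ R d).eq]
  simp only [sum_tmul, tmul_sum, map_sum]
  rw [Finset.sum_comm]
  refine Finset.sum_congr rfl fun i _ => ?_
  conv_rhs => rw [← sum_counit_smul (ℛ R d)]
  simp [Finset.smul_sum, mul_smul]

end ConvSMul

noncomputable def Coalgebra.Repr.one {R B : Type*} [CommSemiring R] [Semiring B] [Bialgebra R B] :
    Repr R (1 : B) Unit where
  index := {()}
  left _ := 1
  right _ := 1
  eq := by simp [Algebra.TensorProduct.one_def]

section Bialgebra

variable [CommRing K] [Ring A] [Bialgebra K A]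

lemma comul2_eq_comul : (comul2 : A ⊗[K] A →ₗ[K] _) = comul := rfl

lemma conv3_eq_convSMul (f g : A ⊗[K] (A ⊗[K] A) →ₗ[K] K) : conv3 f g = convSMul f g := rfl

variable (β : A ⊗[K] A →ₗ[K] K)

lemma mulBeta_eq_convSMul : mulBeta β = convSMul β (LinearMap.mul' K A) := by
  rw [mulBeta, conv2A, convSMul, comul2_eq_comul, ← LinearMap.comp_assoc, ← LinearMap.comp_assoc]
  congr 1
  ext
  simp [Algebra.smul_def]

lemma counit_comp_mulBeta : counit ∘ₗ mulBeta β = β := by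
  rw [mulBeta_eq_convSMul, comp_convSMul, ← Bialgebra.toLinearMap_mulCoalgHom,
    CoalgHomClass.counit_comp, convSMul_counit]

lemma counit_mulBeta (t : A ⊗[K] A) : counit (R := K) (mulBeta β t) = β t :=
  congr($(counit_comp_mulBeta β) t)

lemma comul_comp_mulBeta :
    comul ∘ₗ mulBeta β = map (mulBeta β) (LinearMap.mul' K A) ∘ₗ comul := by
  rw [mulBeta_eq_convSMul, comp_convSMul, ← Bialgebra.toLinearMap_mulCoalgHom,
    ← CoalgHomClass.map_comp_comul, map_convSMul_comp_comul]

variable {β} in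
noncomputable def Coalgebra.Repr.twistedMul {t : A ⊗[K] A} {ι : Type*} (𝓡 : Repr K t ι) :
    Repr K (mulBeta β t) ι where
  index := 𝓡.index
  left i := mulBeta β (𝓡.left i)
  right i := LinearMap.mul' K A (𝓡.right i)
  eq := by simp [← LinearMap.comp_apply comul, comul_comp_mulBeta, ← 𝓡.eq]

lemma Coalgebra.Repr.mulBeta_eq_sum {t : A ⊗[K] A} {ι : Type*} (𝓡 : Repr K t ι) :
    mulBeta β t = ∑ i ∈ 𝓡.index, β (𝓡.left i) • LinearMap.mul' K A (𝓡.right i) := by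
  rw [mulBeta_eq_convSMul, 𝓡.convSMul_apply]

lemma conv3_counit_tensor_tmul (x y z : A) :
    conv3 ((TensorProduct.lid K K).toLinearMap ∘ₗ map counit β)
        (β ∘ₗ map LinearMap.id (LinearMap.mul' K A)) (x ⊗ₜ (y ⊗ₜ z)) =
      β (x ⊗ₜ mulBeta β (y ⊗ₜ z)) := by
  have hx : β ∘ₗ map LinearMap.id (LinearMap.mul' K A) ∘ₗ TensorProduct.mk K A (A ⊗[K] A) x =
      (β ∘ₗ TensorProduct.mk K A A x) ∘ₗ LinearMap.mul' K A := by
    ext; rfl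
  rw [conv3_eq_convSMul, convSMul_counit_tensor_tmul, LinearMap.comp_assoc, hx, ← comp_convSMul,
    ← mulBeta_eq_convSMul]
  rfl

lemma conv3_tensor_counit_tmul (x y z : A) :
    conv3 (((TensorProduct.lid K K).toLinearMap ∘ₗ map β counit) ∘ₗ
          (TensorProduct.assoc K A A A).symm.toLinearMap)
        ((β ∘ₗ map (LinearMap.mul' K A) LinearMap.id) ∘ₗ
          (TensorProduct.assoc K A A A).symm.toLinearMap) (x ⊗ₜ (y ⊗ₜ z)) =
      β (mulBeta β (x ⊗ₜ y) ⊗ₜ z) := by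
  have hz : β ∘ₗ map (LinearMap.mul' K A) LinearMap.id ∘ₗ (TensorProduct.mk K (A ⊗[K] A) A).flip z =
      (β ∘ₗ (TensorProduct.mk K A A).flip z) ∘ₗ LinearMap.mul' K A := by
    ext; rfl
  calc _ = convSMul ((TensorProduct.lid K K).toLinearMap ∘ₗ map β counit)
        (β ∘ₗ map (LinearMap.mul' K A) LinearMap.id) ((x ⊗ₜ y) ⊗ₜ z) :=
        congr($(convSMul_comp_coalgHom _ _
          (Coalgebra.TensorProduct.assoc K K A A A).symm.toCoalgHom) (x ⊗ₜ (y ⊗ₜ z))).symm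
    _ = _ := by
      rw [convSMul_tensor_counit_tmul, LinearMap.comp_assoc, hz, ← comp_convSMul,
        ← mulBeta_eq_convSMul]
      rfl

lemma isCocycleEq_mul'_iff : IsCocycleEq (LinearMap.mul' K A) β ↔
    ∀ x y z : A, β (x ⊗ₜ mulBeta β (y ⊗ₜ z)) = β (mulBeta β (x ⊗ₜ y) ⊗ₜ z) := by
  refine ⟨fun h x y z => ?_, fun h => ext_threefold' fun x y z => ?_⟩
  · rw [← conv3_counit_tensor_tmul, ← conv3_tensor_counit_tmul, h]
  · rw [conv3_counit_tensor_tmul, conv3_tensor_counit_tmul, h]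

lemma mulBeta_assoc_iff :
    (∀ x y z : A, mulBeta β (mulBeta β (x ⊗ₜ y) ⊗ₜ z) = mulBeta β (x ⊗ₜ mulBeta β (y ⊗ₜ z))) ↔
      ∀ x y z : A, β (x ⊗ₜ mulBeta β (y ⊗ₜ z)) = β (mulBeta β (x ⊗ₜ y) ⊗ₜ z) := by
  refine ⟨fun h x y z => ?_, fun h x y z => ?_⟩
  · rw [← counit_mulBeta, ← counit_mulBeta, h]
  · rw [((((ℛ K x).tmul (ℛ K y)).twistedMul (β := β)).tmul (ℛ K z)).mulBeta_eq_sum,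
      ((ℛ K x).tmul (((ℛ K y).tmul (ℛ K z)).twistedMul (β := β))).mulBeta_eq_sum]
    simp [Coalgebra.Repr.twistedMul, Finset.sum_product, h, mul_assoc]

lemma isUnital_iff_mulBeta :
    IsUnital β ↔ ∀ x : A, mulBeta β (x ⊗ₜ 1) = x ∧ mulBeta β (1 ⊗ₜ x) = x := by
  refine ⟨fun hβ x => ⟨?_, ?_⟩, fun h x => ⟨?_, ?_⟩⟩
  · conv_rhs => rw [← sum_counit_smul (ℛ K x)]
    simp [((ℛ K x).tmul Coalgebra.Repr.one).mulBeta_eq_sum, Coalgebra.Repr.one, (hβ _).1]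
  · conv_rhs => rw [← sum_counit_smul (ℛ K x)]
    simp [(Coalgebra.Repr.one.tmul (ℛ K x)).mulBeta_eq_sum, Coalgebra.Repr.one, (hβ _).2]
  · rw [← counit_mulBeta, (h x).1]
  · rw [← counit_mulBeta, (h x).2]

end Bialgebra

/-- `β` satisfies the unital 2-cocycle conditions if and only if the
twisted multiplication `*_β` makes `A` an associative unital algebra with unit `1_A`. -/
theorem isCocycle_iff_mulBeta_assoc_unital [CommRing K] [Ring A]
    [Bialgebra K A] (β : (A ⊗[K] A) →ₗ[K] K) :
    (IsCocycleEq (LinearMap.mul' K A) β ∧ IsUnital β) ↔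
      ((∀ x y z : A,
          mulBeta β (mulBeta β (x ⊗ₜ[K] y) ⊗ₜ[K] z) =
            mulBeta β (x ⊗ₜ[K] mulBeta β (y ⊗ₜ[K] z))) ∧
        (∀ x : A, mulBeta β (x ⊗ₜ[K] (1 : A)) = x ∧
          mulBeta β ((1 : A) ⊗ₜ[K] x) = x)) := by
  rw [isCocycleEq_mul'_iff, mulBeta_assoc_iff, isUnital_iff_mulBeta]
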